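/- arXiv:1706.03394 — 2 statements merged into one kernel-verified Lean document; each statement's English description precedes it below -/
import Mathlib

section
/- Let λ > 0, ϑ ∈ (0,1), ν ∈ (0,1] and t > 0. Define v(s) = 2λ² s^{2ν}/Γ(2ν+1) − λ² s^{2ν}/Γ(ν+1)² + λ s^ν/Γ(ν+1). Then the function F(t) = (1/Γ(1−ϑ)) · ∫₀ᵗ (t−s)^{−ϑ} v(s) ds has derivative at t equal to λ t^{ν−ϑ}/Γ(1+ν−ϑ) + (λ²/Γ(1+2ν−ϑ)) · (2 − Γ(1+2ν)/Γ(ν+1)²) · t^{2ν−ϑ}. -/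
/-!
The variance `v` is a linear combination of the powers `s ^ (2ν)` and `s ^ ν`, so it suffices to
treat `s ^ α`. Substituting `s = τ x` turns `∫₀^τ (τ - s)^(-ϑ) s^α ds` into
`τ^(α+1-ϑ) B(α+1, 1-ϑ)`; differentiating and using `Γ(α+2-ϑ) = (α+1-ϑ) Γ(α+1-ϑ)` gives the
classical `D^ϑ s^α = Γ(α+1) / Γ(α+1-ϑ) · t^(α-ϑ)`.
-/

open Real intervalIntegral ProbabilityTheory

theorem integral_sub_rpow_mul_rpow {α ϑ τ : ℝ} (hα : -1 < α) (hϑ : ϑ < 1) (hτ : 0 < τ) :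
    ∫ s in (0 : ℝ)..τ, (τ - s) ^ (-ϑ) * s ^ α = beta (α + 1) (1 - ϑ) * τ ^ (α + 1 - ϑ) := by
  apply Complex.ofReal_injective
  calc ((∫ s in (0 : ℝ)..τ, (τ - s) ^ (-ϑ) * s ^ α : ℝ) : ℂ)
      = ∫ s in (0 : ℝ)..τ,
          (s : ℂ) ^ ((α + 1 : ℝ) - 1 : ℂ) * ((τ : ℂ) - s) ^ ((1 - ϑ : ℝ) - 1 : ℂ) := by
        rw [← integral_ofReal]
        refine integral_congr fun s hs => ?_
        rw [Set.uIcc_of_le hτ.le] at hs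
        push_cast
        rw [Complex.ofReal_cpow (sub_nonneg.2 hs.2), Complex.ofReal_cpow hs.1]
        push_cast
        ring_nf
    _ = (τ : ℂ) ^ ((α + 1 : ℝ) + (1 - ϑ : ℝ) - 1 : ℂ)
          * Complex.betaIntegral (α + 1 : ℝ) (1 - ϑ : ℝ) :=
        Complex.betaIntegral_scaled _ _ hτ
    _ = _ := by
        rw [Complex.betaIntegral_eq_Gamma_mul_div _ _ (by simpa using by linarith)
            (by simpa using by linarith), ← Complex.ofReal_add, Complex.Gamma_ofReal,
          Complex.Gamma_ofReal, Complex.Gamma_ofReal, ← Complex.ofReal_one, ← Complex.ofReal_sub,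
          ← Complex.ofReal_cpow hτ.le, beta]
        push_cast
        ring_nf

theorem hasDerivAt_integral_sub_rpow_mul_rpow {α ϑ t : ℝ} (hα : -1 < α) (hϑ : ϑ < 1)
    (hαϑ : ϑ < α + 1) (ht : 0 < t) :
    HasDerivAt (fun τ => 1 / Gamma (1 - ϑ) * ∫ s in (0 : ℝ)..τ, (τ - s) ^ (-ϑ) * s ^ α)
      (Gamma (α + 1) / Gamma (α + 1 - ϑ) * t ^ (α - ϑ)) t := by
  have hclosed : (fun τ => 1 / Gamma (1 - ϑ) * ∫ s in (0 : ℝ)..τ, (τ - s) ^ (-ϑ) * s ^ α)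
      =ᶠ[nhds t] fun τ => 1 / Gamma (1 - ϑ) * (beta (α + 1) (1 - ϑ) * τ ^ (α + 1 - ϑ)) := by
    filter_upwards [eventually_gt_nhds ht] with τ hτ
    rw [integral_sub_rpow_mul_rpow hα hϑ hτ]
  have hpow := (Real.hasDerivAt_rpow_const (p := α + 1 - ϑ) (Or.inl ht.ne')).const_mul
    (1 / Gamma (1 - ϑ) * beta (α + 1) (1 - ϑ))
  refine (hpow.congr_of_eventuallyEq (by simpa only [mul_assoc] using hclosed)).congr_deriv ?_
  have hrec : Gamma (α + 1 + (1 - ϑ)) = (α + 1 - ϑ) * Gamma (α + 1 - ϑ) := by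
    rw [show α + 1 + (1 - ϑ) = α + 1 - ϑ + 1 by ring, Gamma_add_one (by linarith)]
  have hΓ : Gamma (1 - ϑ) ≠ 0 := (Gamma_pos_of_pos (by linarith)).ne'
  have hΓ' : Gamma (α + 1 - ϑ) ≠ 0 := (Gamma_pos_of_pos (by linarith)).ne'
  have hexp : α + 1 - ϑ ≠ 0 := by linarith
  rw [beta, hrec, show α + 1 - ϑ - 1 = α - ϑ by ring]
  field_simp

theorem intervalIntegrable_sub_rpow_mul_rpow {α ϑ : ℝ} (hα : 0 ≤ α) (hϑ : ϑ < 1) (τ : ℝ) :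
    IntervalIntegrable (fun s => (τ - s) ^ (-ϑ) * s ^ α) MeasureTheory.volume 0 τ := by
  have hkernel : IntervalIntegrable (fun s => (τ - s) ^ (-ϑ)) MeasureTheory.volume 0 τ := by
    simpa using ((intervalIntegrable_rpow' (a := 0) (b := τ)
      (by linarith : (-1 : ℝ) < -ϑ)).comp_sub_left τ).symm
  exact hkernel.mul_continuousOn (continuous_rpow_const hα).continuousOn

theorem stmt_5_general (lam ϑ ν : ℝ) (hϑ : ϑ ∈ Set.Ioo (0 : ℝ) 1)
    (hν : ν ∈ Set.Ioc (0 : ℝ) 1) (t : ℝ) (ht : 0 < t) :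
    HasDerivAt
      (fun τ : ℝ => (1 / Real.Gamma (1 - ϑ)) *
        ∫ s in (0 : ℝ)..τ, (τ - s) ^ (-ϑ) *
          (2 * lam ^ 2 * s ^ (2 * ν) / Real.Gamma (2 * ν + 1)
            - lam ^ 2 * s ^ (2 * ν) / Real.Gamma (ν + 1) ^ 2
            + lam * s ^ ν / Real.Gamma (ν + 1)))
      (lam * t ^ (ν - ϑ) / Real.Gamma (1 + ν - ϑ)
        + lam ^ 2 / Real.Gamma (1 + 2 * ν - ϑ)
          * (2 - Real.Gamma (1 + 2 * ν) / Real.Gamma (ν + 1) ^ 2) * t ^ (2 * ν - ϑ)) t := by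
  obtain ⟨-, hϑ⟩ := hϑ
  obtain ⟨hν, -⟩ := hν
  set A := 2 * lam ^ 2 / Gamma (2 * ν + 1) - lam ^ 2 / Gamma (ν + 1) ^ 2
  set C := lam / Gamma (ν + 1)
  have hsplit : ∀ τ : ℝ, (1 / Gamma (1 - ϑ)) *
        ∫ s in (0 : ℝ)..τ, (τ - s) ^ (-ϑ) *
          (2 * lam ^ 2 * s ^ (2 * ν) / Gamma (2 * ν + 1)
            - lam ^ 2 * s ^ (2 * ν) / Gamma (ν + 1) ^ 2 + lam * s ^ ν / Gamma (ν + 1))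
      = A * (1 / Gamma (1 - ϑ) * ∫ s in (0 : ℝ)..τ, (τ - s) ^ (-ϑ) * s ^ (2 * ν))
        + C * (1 / Gamma (1 - ϑ) * ∫ s in (0 : ℝ)..τ, (τ - s) ^ (-ϑ) * s ^ ν) := fun τ => by
    rw [mul_left_comm A, mul_left_comm C, ← mul_add]
    congr 1
    rw [← integral_const_mul, ← integral_const_mul, ← integral_add
      ((intervalIntegrable_sub_rpow_mul_rpow (by positivity) hϑ τ).const_mul A)
      ((intervalIntegrable_sub_rpow_mul_rpow hν.le hϑ τ).const_mul C)]
    refine integral_congr fun s _ => ?_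
    ring
  simp only [hsplit]
  refine ((hasDerivAt_integral_sub_rpow_mul_rpow (by linarith) hϑ (by linarith) ht).const_mul A
    |>.add <| (hasDerivAt_integral_sub_rpow_mul_rpow (by linarith) hϑ (by linarith) ht).const_mul
      C).congr_deriv ?_
  have hΓν : Gamma (ν + 1) ≠ 0 := (Gamma_pos_of_pos (by linarith)).ne'
  have hΓ2ν : Gamma (2 * ν + 1) ≠ 0 := (Gamma_pos_of_pos (by linarith)).ne'
  rw [add_comm 1 (2 * ν), add_comm 1 ν]
  simp only [A, C]
  field_simp
  ring

/-- Lemma 3.5: the Riemann–Liouville fractional integral of order `1−ϑ` of the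
variance `v(s) = 2λ²s^(2ν)/Γ(2ν+1) − λ²s^(2ν)/Γ(ν+1)² + λs^ν/Γ(ν+1)` of the
fractional Poisson process has derivative
`λ t^(ν−ϑ)/Γ(1+ν−ϑ) + (λ²/Γ(1+2ν−ϑ))(2 − Γ(1+2ν)/Γ(ν+1)²) t^(2ν−ϑ)` at `t > 0`. -/
theorem stmt_5 (lam ϑ ν : ℝ) (hlam : 0 < lam) (hϑ : ϑ ∈ Set.Ioo (0 : ℝ) 1)
    (hν : ν ∈ Set.Ioc (0 : ℝ) 1) (t : ℝ) (ht : 0 < t) :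
    HasDerivAt
      (fun τ : ℝ => (1 / Real.Gamma (1 - ϑ)) *
        ∫ s in (0 : ℝ)..τ, (τ - s) ^ (-ϑ) *
          (2 * lam ^ 2 * s ^ (2 * ν) / Real.Gamma (2 * ν + 1)
            - lam ^ 2 * s ^ (2 * ν) / Real.Gamma (ν + 1) ^ 2
            + lam * s ^ ν / Real.Gamma (ν + 1)))
      (lam * t ^ (ν - ϑ) / Real.Gamma (1 + ν - ϑ)
        + lam ^ 2 / Real.Gamma (1 + 2 * ν - ϑ)
          * (2 - Real.Gamma (1 + 2 * ν) / Real.Gamma (ν + 1) ^ 2) * t ^ (2 * ν - ϑ)) t :=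
  stmt_5_general lam ϑ ν hϑ hν t ht
end

section
/- Let ϑ ∈ (0,1), a > 0, b > 0 and t > 0. Then the function F(t) = (1/Γ(1−ϑ)) · ∫₀ᵗ (t−s)^{−ϑ} · (a/b)(e^{bs} − 1) ds has derivative at t equal to a b^{ϑ−1} e^{bt} · [ 1 + (ϑ/Γ(1−ϑ)) · ∫_{bt}^∞ u^{−ϑ−1} e^{−u} du ] − a t^{−ϑ} / (b Γ(1−ϑ)). -/
/-!
Substituting `u = τ - s`, the fractional integral equals
`(a/b) (e^{bτ} ∫₀^τ u^{-ϑ} e^{-bu} du - τ^{1-ϑ}/(1-ϑ))`; when differentiating, the two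
`t^{-ϑ}` terms cancel and the derivative is `(a/Γ(1-ϑ)) e^{bt} ∫₀^t u^{-ϑ} e^{-bu} du`.
Rescaling `u ↦ bu` turns the remaining integral into `b^{ϑ-1} (Γ(1-ϑ) - Γ(1-ϑ, bt))`, and
integration by parts gives `Γ(1-ϑ, x) = x^{-ϑ} e^{-x} - ϑ Γ(-ϑ, x)`.
-/

open Real MeasureTheory Set Filter

noncomputable def upperIncompleteGamma (s x : ℝ) : ℝ :=
  ∫ u in Ioi x, u ^ (s - 1) * exp (-u)

lemma integrableOn_rpow_mul_exp_neg_Ioi (s : ℝ) {x : ℝ} (hx : 0 < x) :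
    IntegrableOn (fun u : ℝ => u ^ (s - 1) * exp (-u)) (Ioi x) := by
  refine integrable_of_isBigO_exp_neg one_half_pos (fun u hu => ?_) ?_
  · exact ((continuousAt_rpow_const u _ (Or.inl (hx.trans_le hu).ne')).mul
      (continuous_exp.comp continuous_neg).continuousAt).continuousWithinAt
  · simpa only [mul_comm] using (Gamma_integrand_isLittleO (s - 1)).isBigO

lemma upperIncompleteGamma_add_one (s : ℝ) {x : ℝ} (hx : 0 < x) :
    upperIncompleteGamma (s + 1) x = x ^ s * exp (-x) + s * upperIncompleteGamma s x := by
  have hderiv : ∀ u ∈ Ioi x, HasDerivAt (fun u : ℝ => u ^ s * exp (-u))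
      (s * (u ^ (s - 1) * exp (-u)) - u ^ (s + 1 - 1) * exp (-u)) u := by
    intro u hu
    refine ((hasDerivAt_rpow_const (p := s) (Or.inl (hx.trans hu).ne')).mul
      (hasDerivAt_neg u).exp).congr_deriv ?_
    rw [add_sub_cancel_right]
    ring
  have hint := ((integrableOn_rpow_mul_exp_neg_Ioi s hx).const_mul s).sub
    (integrableOn_rpow_mul_exp_neg_Ioi (s + 1) hx)
  have hcont : ContinuousWithinAt (fun u : ℝ => u ^ s * exp (-u)) (Ici x) x :=
    ((continuousAt_rpow_const x s (Or.inl hx.ne')).mul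
      (continuous_exp.comp continuous_neg).continuousAt).continuousWithinAt
  have hlim : Tendsto (fun u : ℝ => u ^ s * exp (-u)) atTop (nhds 0) := by
    simpa using tendsto_rpow_mul_exp_neg_mul_atTop_nhds_zero s 1 one_pos
  have key := integral_Ioi_of_hasDerivAt_of_tendsto hcont hderiv hint hlim
  rw [integral_sub ((integrableOn_rpow_mul_exp_neg_Ioi s hx).const_mul s)
    (integrableOn_rpow_mul_exp_neg_Ioi (s + 1) hx), integral_const_mul] at key
  unfold upperIncompleteGamma
  linarith

lemma integral_rpow_mul_exp_neg_eq_Gamma_sub {s : ℝ} (hs : 0 < s) {x : ℝ} (hx : 0 ≤ x) :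
    ∫ u in (0 : ℝ)..x, u ^ (s - 1) * exp (-u) = Gamma s - upperIncompleteGamma s x := by
  have hint : IntegrableOn (fun u : ℝ => u ^ (s - 1) * exp (-u)) (Ioi 0) := by
    simpa only [mul_comm] using GammaIntegral_convergent hs
  have hsplit := setIntegral_union (Ioc_disjoint_Ioi le_rfl) measurableSet_Ioi
    (hint.mono_set Ioc_subset_Ioi_self) (hint.mono_set (Ioi_subset_Ioi hx))
  rw [Ioc_union_Ioi_eq_Ioi hx] at hsplit
  rw [Gamma_eq_integral hs, intervalIntegral.integral_of_le hx, upperIncompleteGamma]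
  simp only [mul_comm (exp _)] at hsplit ⊢
  linarith

lemma integral_rpow_mul_exp_neg_mul (r : ℝ) {b : ℝ} (hb : 0 < b) {t : ℝ} (ht : 0 ≤ t) :
    ∫ u in (0 : ℝ)..t, u ^ r * exp (-(b * u))
      = b ^ (-(r + 1)) * ∫ v in (0 : ℝ)..b * t, v ^ r * exp (-v) := by
  have hsub := intervalIntegral.smul_integral_comp_mul_left
    (fun v : ℝ => v ^ r * exp (-v)) b (a := 0) (b := t)
  rw [mul_zero, smul_eq_mul] at hsub
  rw [← hsub, ← mul_assoc, ← intervalIntegral.integral_const_mul]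
  refine intervalIntegral.integral_congr fun u hu => ?_
  have hu : 0 ≤ u := by rw [uIcc_of_le ht] at hu; exact hu.1
  have hb' : b ^ (-(r + 1)) * b * b ^ r = 1 := by
    rw [mul_assoc, mul_comm b, ← rpow_add_one hb.ne', ← rpow_add hb, neg_add_cancel, rpow_zero]
  simp only [mul_rpow hb.le hu]
  linear_combination (-(u ^ r * exp (-(b * u)))) * hb'

lemma integral_rpow_neg_mul_exp_neg_mul {ϑ : ℝ} (hϑ : ϑ < 1) {b : ℝ} (hb : 0 < b) {t : ℝ}
    (ht : 0 < t) :
    ∫ u in (0 : ℝ)..t, u ^ (-ϑ) * exp (-(b * u)) = b ^ (ϑ - 1) *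
      (Gamma (1 - ϑ) - (b * t) ^ (-ϑ) * exp (-(b * t)) + ϑ * upperIncompleteGamma (-ϑ) (b * t)) := by
  have hbt : 0 < b * t := mul_pos hb ht
  have hlower := integral_rpow_mul_exp_neg_eq_Gamma_sub (s := 1 - ϑ) (by linarith) hbt.le
  have hupper := upperIncompleteGamma_add_one (-ϑ) hbt
  rw [sub_sub_cancel_left] at hlower
  rw [neg_add_eq_sub] at hupper
  rw [integral_rpow_mul_exp_neg_mul _ hb ht.le, hlower, hupper, neg_add_eq_sub, neg_sub]
  ring

lemma integral_sub_rpow_mul_exp_sub_one {r : ℝ} (hr : -1 < r) (b τ : ℝ) :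
    ∫ s in (0 : ℝ)..τ, (τ - s) ^ r * (exp (b * s) - 1)
      = exp (b * τ) * (∫ u in (0 : ℝ)..τ, u ^ r * exp (-(b * u))) - τ ^ (r + 1) / (r + 1) := by
  have hpow : IntervalIntegrable (fun u : ℝ => u ^ r) volume 0 τ :=
    intervalIntegral.intervalIntegrable_rpow' hr
  have hexp : IntervalIntegrable (fun u : ℝ => u ^ r * exp (-(b * u))) volume 0 τ :=
    hpow.mul_continuousOn (by fun_prop)
  have hshift : ∀ s, exp (b * s) = exp (b * τ) * exp (-(b * (τ - s))) := fun s => by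
    rw [← exp_add]; ring_nf
  calc ∫ s in (0 : ℝ)..τ, (τ - s) ^ r * (exp (b * s) - 1)
      = ∫ s in (0 : ℝ)..τ, (fun u => exp (b * τ) * (u ^ r * exp (-(b * u))) - u ^ r) (τ - s) := by
        refine intervalIntegral.integral_congr fun s _ => ?_
        simp only [hshift s]; ring
    _ = ∫ u in (0 : ℝ)..τ, (exp (b * τ) * (u ^ r * exp (-(b * u))) - u ^ r) := by
        rw [intervalIntegral.integral_comp_sub_left
          (fun u => exp (b * τ) * (u ^ r * exp (-(b * u))) - u ^ r), sub_self, sub_zero]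
    _ = _ := by
        rw [intervalIntegral.integral_sub (hexp.const_mul _) hpow,
          intervalIntegral.integral_const_mul, integral_rpow (Or.inl hr),
          zero_rpow (by linarith), sub_zero]

lemma hasDerivAt_integral_sub_rpow_mul_exp_sub_one {r : ℝ} (hr : -1 < r) (b : ℝ) {t : ℝ}
    (ht : 0 < t) :
    HasDerivAt (fun τ => ∫ s in (0 : ℝ)..τ, (τ - s) ^ r * (exp (b * s) - 1))
      (b * exp (b * t) * ∫ u in (0 : ℝ)..t, u ^ r * exp (-(b * u))) t := by
  have hcont : ∀ u ∈ Ioi (0 : ℝ), ContinuousAt (fun u : ℝ => u ^ r * exp (-(b * u))) u :=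
    fun u hu => (continuousAt_rpow_const u r (Or.inl hu.ne')).mul (by fun_prop)
  have hG : HasDerivAt (fun τ => ∫ u in (0 : ℝ)..τ, u ^ r * exp (-(b * u)))
      (t ^ r * exp (-(b * t))) t :=
    intervalIntegral.integral_hasDerivAt_right
      ((intervalIntegral.intervalIntegrable_rpow' hr).mul_continuousOn (by fun_prop))
      (ContinuousAt.stronglyMeasurableAtFilter isOpen_Ioi hcont t ht) (hcont t ht)
  have hpow : HasDerivAt (fun τ : ℝ => τ ^ (r + 1) / (r + 1)) (t ^ r) t := by
    have := (hasDerivAt_rpow_const (p := r + 1) (Or.inl ht.ne')).div_const (r + 1)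
    rwa [add_sub_cancel_right, mul_div_cancel_left₀ _ (by linarith)] at this
  have hexp : HasDerivAt (fun τ => exp (b * τ)) (exp (b * t) * b) t := by
    simpa using ((hasDerivAt_id t).const_mul b).exp
  simp only [integral_sub_rpow_mul_exp_sub_one hr b]
  refine ((hexp.mul hG).sub hpow).congr_deriv ?_
  have : exp (b * t) * exp (-(b * t)) = 1 := by rw [← exp_add, add_neg_cancel, exp_zero]
  linear_combination t ^ r * this

theorem stmt_8_general (ϑ a b : ℝ) (hϑ : ϑ ∈ Set.Ioo (0 : ℝ) 1) (hb : 0 < b)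
    (t : ℝ) (ht : 0 < t) :
    HasDerivAt
      (fun τ : ℝ => (1 / Real.Gamma (1 - ϑ)) *
        ∫ s in (0 : ℝ)..τ, (τ - s) ^ (-ϑ) * ((a / b) * (Real.exp (b * s) - 1)))
      (a * b ^ (ϑ - 1) * Real.exp (b * t)
          * (1 + ϑ / Real.Gamma (1 - ϑ)
              * ∫ u in Set.Ioi (b * t), u ^ (-ϑ - 1) * Real.exp (-u))
        - a * t ^ (-ϑ) / (b * Real.Gamma (1 - ϑ))) t := by
  have hr : -1 < -ϑ := by linarith [hϑ.2]
  have hΓ : Gamma (1 - ϑ) ≠ 0 := (Gamma_pos_of_pos (by linarith [hϑ.2])).ne'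
  have hF : (fun τ : ℝ => (1 / Gamma (1 - ϑ)) *
        ∫ s in (0 : ℝ)..τ, (τ - s) ^ (-ϑ) * ((a / b) * (exp (b * s) - 1)))
      = fun τ => a / (b * Gamma (1 - ϑ)) * ∫ s in (0 : ℝ)..τ, (τ - s) ^ (-ϑ) * (exp (b * s) - 1) := by
    funext τ
    rw [← intervalIntegral.integral_const_mul, ← intervalIntegral.integral_const_mul]
    congr 1 with s
    field_simp
  rw [hF]
  refine ((hasDerivAt_integral_sub_rpow_mul_exp_sub_one hr b ht).const_mul _).congr_deriv ?_
  rw [integral_rpow_neg_mul_exp_neg_mul hϑ.2 hb ht, mul_rpow hb.le ht.le, exp_neg]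
  have hb' : b ^ (ϑ - 1) * b ^ (-ϑ) * b = 1 := by
    rw [← rpow_add hb, show ϑ - 1 + -ϑ = -1 by ring, rpow_neg_one, inv_mul_cancel₀ hb.ne']
  unfold upperIncompleteGamma
  field_simp
  linear_combination (-a * t ^ (-ϑ)) * hb'

/-- Lemma 3.7, Gompertz rate `Λ(t) = (a/b)(e^(bt) − 1)`: the fractional integral
of order `1−ϑ` of `s ↦ (a/b)(e^(bs) − 1)` has derivative
`a b^(ϑ−1) e^(bt) [1 + (ϑ/Γ(1−ϑ)) Γ(−ϑ, bt)] − a t^(−ϑ)/(b Γ(1−ϑ))` at `t > 0`,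
where `Γ(−ϑ, bt) = ∫_{bt}^∞ u^(−ϑ−1) e^(−u) du`. -/
theorem stmt_8 (ϑ a b : ℝ) (hϑ : ϑ ∈ Set.Ioo (0 : ℝ) 1) (ha : 0 < a) (hb : 0 < b)
    (t : ℝ) (ht : 0 < t) :
    HasDerivAt
      (fun τ : ℝ => (1 / Real.Gamma (1 - ϑ)) *
        ∫ s in (0 : ℝ)..τ, (τ - s) ^ (-ϑ) * ((a / b) * (Real.exp (b * s) - 1)))
      (a * b ^ (ϑ - 1) * Real.exp (b * t)
          * (1 + ϑ / Real.Gamma (1 - ϑ)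
              * ∫ u in Set.Ioi (b * t), u ^ (-ϑ - 1) * Real.exp (-u))
        - a * t ^ (-ϑ) / (b * Real.Gamma (1 - ϑ))) t :=
  stmt_8_general ϑ a b hϑ hb t ht
end
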